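/- Let c₄ ∈ (1,2), p_m, p_r ∈ (0,1), and v ≥ 10 an integer. Define c₅ = (1 + c₄·p_m·p_r)·(2 − c₄)/(2·c₄). Then (1 − c₄/(v·(1 + (1 + c₄·p_m·p_r)/c₅)))² > 1 − c₄·(2 − c₄)/v. -/
import Mathlib


/-- Key inequality (Case 1 vs Case 3 of the optimal-attention analysis): with
`c₄ ∈ (1,2)`, `p_m, p_r ∈ (0,1)`, `v ≥ 10` and
`c₅ = (1 + c₄·p_m·p_r)·(2 − c₄)/(2·c₄)`, we have
`(1 − c₄/(v·(1 + (1 + c₄·p_m·p_r)/c₅)))² > 1 − c₄·(2 − c₄)/v`. -/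
theorem stmt12 (c₄ p_m p_r : ℝ) (hc₄ : c₄ ∈ Set.Ioo (1:ℝ) 2)
    (hpm : p_m ∈ Set.Ioo (0:ℝ) 1) (hpr : p_r ∈ Set.Ioo (0:ℝ) 1)
    (v : ℕ) (hv : 10 ≤ v)
    (c₅ : ℝ) (hc₅ : c₅ = (1 + c₄ * p_m * p_r) * (2 - c₄) / (2 * c₄)) :
    (1 - c₄ / ((v : ℝ) * (1 + (1 + c₄ * p_m * p_r) / c₅))) ^ 2
      > 1 - c₄ * (2 - c₄) / v := by
  obtain ⟨h1, h2⟩ := hc₄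
  obtain ⟨hm1, hm2⟩ := hpm
  obtain ⟨hr1, hr2⟩ := hpr
  have ha : (0:ℝ) < 1 + c₄ * p_m * p_r := by positivity
  have h3 : (0:ℝ) < 2 - c₄ := by linarith
  have h4 : (0:ℝ) < 2 + c₄ := by linarith
  have hc₅pos : 0 < c₅ := by
    rw [hc₅]; positivity
  have key : 1 + (1 + c₄ * p_m * p_r) / c₅ = (2 + c₄) / (2 - c₄) := by
    rw [hc₅]
    field_simp
    ring
  rw [key]
  have hv' : (10:ℝ) ≤ (v:ℝ) := by exact_mod_cast hv
  have hvpos : (0:ℝ) < v := by linarith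
  have hx : c₄ / ((v:ℝ) * ((2 + c₄) / (2 - c₄)))
      = c₄ * (2 - c₄) / ((v:ℝ) * (2 + c₄)) := by
    field_simp
  rw [hx]
  have ht : 0 < c₄ * (2 - c₄) := mul_pos (by linarith) h3
  have hD : 0 < (v:ℝ) * (2 + c₄) := mul_pos hvpos h4
  have h6 : 2 * (c₄ * (2 - c₄) / ((v:ℝ) * (2 + c₄))) < c₄ * (2 - c₄) / v := by
    rw [mul_div_assoc', div_lt_div_iff₀ hD hvpos]
    nlinarith [mul_pos (mul_pos ht hvpos) (show (0:ℝ) < c₄ by linarith)]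
  nlinarith [sq_nonneg (c₄ * (2 - c₄) / ((v:ℝ) * (2 + c₄)))]
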